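/- Suppose |𝒫| = 4, there are exactly 4 bad edges, and D(e) ≤ 2 holds for every good edge e. Then either the 4 bad edges are pairwise vertex-disjoint (forming a perfect matching on the 8 vertices of End(𝒫)), or the 4 bad edges form a cycle of length 4 and the remaining 4 vertices of End(𝒫) are incident with no bad edge. -/

import Mathlib

/-- The set of endpoints of a family of paths whose endpoints are given by `u i`, `v i`. -/
def endpointSet {V ι : Type*} (u v : ι → V) : Set V := Set.range u ∪ Set.range v

/-- `e` is an edge of `K_n` joining an endpoint of one path of the family to an endpoint
of a different path of the family. -/
def IsCrossEdge {V ι : Type*} (u v : ι → V) (e : Sym2 V) : Prop :=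
  ∃ (i j : ι) (x y : V), i ≠ j ∧ (x = u i ∨ x = v i) ∧ (y = u j ∨ y = v j) ∧ e = s(x, y)

/-- A cross edge is *bad* if it belongs to the graph `B`. -/
def IsBadEdge {V ι : Type*} (B : SimpleGraph V) (u v : ι → V) (e : Sym2 V) : Prop :=
  IsCrossEdge u v e ∧ e ∈ B.edgeSet

/-- A cross edge is *good* if it does not belong to the graph `B`. -/
def IsGoodEdge {V ι : Type*} (B : SimpleGraph V) (u v : ι → V) (e : Sym2 V) : Prop :=
  IsCrossEdge u v e ∧ e ∉ B.edgeSet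

/-- `Dval B u v e` is the number of bad edges sharing a vertex with `e`. -/
noncomputable def Dval {V ι : Type*} (B : SimpleGraph V) (u v : ι → V) (e : Sym2 V) : ℕ :=
  Set.ncard {f : Sym2 V | IsBadEdge B u v f ∧ ∃ z, z ∈ e ∧ z ∈ f}

/-!
The bad edges form a graph `G` inside the complete multipartite graph on the eight endpoints whose
parts are the endpoint pairs of the paths, and for a good edge `xy` we have `D(xy) = deg x + deg y`.
A vertex of degree at least three would make all six of its cross edges bad, so every degree is at
most two. If every degree is at most one, the degree sum `8` over the eight endpoints forces a
perfect matching. Otherwise some endpoint `x` has exactly two bad neighbours `y₁, y₂`. Every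
other endpoint across from `x` then has degree zero, so the degree sum forces the other endpoint
`x'` of the path of `x` to have degree two, and its bad neighbours can only be `y₁, y₂`: the bad
edges form the cycle `x y₁ x' y₂`.
-/

open Finset SimpleGraph Function

section

variable {V ι : Type*} {u v : ι → V} {B : SimpleGraph V}

theorem injective_sumElim_of_disjoint_support {G : SimpleGraph V}
    (P : ∀ i, G.Walk (u i) (v i)) (hne : ∀ i, u i ≠ v i)
    (hdisj : Pairwise fun i j => (P i).support.Disjoint (P j).support) :
    Injective (Sum.elim u v) := by
  have eq_of_mem {i j x y} (hi : x ∈ (P i).support) (hj : y ∈ (P j).support) (h : x = y) :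
      i = j :=
    by_contra fun hij => hdisj hij hi (h ▸ hj)
  have hu i : u i ∈ (P i).support := (P i).start_mem_support
  have hv i : v i ∈ (P i).support := (P i).end_mem_support
  rintro (i | i) (j | j) h <;> simp only [Sum.elim_inl, Sum.elim_inr] at h
  · rw [eq_of_mem (hu i) (hu j) h]
  · obtain rfl := eq_of_mem (hu i) (hv j) h
    exact absurd h (hne i)
  · obtain rfl := eq_of_mem (hv i) (hu j) h
    exact absurd h.symm (hne i)
  · rw [eq_of_mem (hv i) (hv j) h]

theorem isCrossEdge_mk_iff {x y : V} :
    IsCrossEdge u v s(x, y) ↔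
      ∃ i j, i ≠ j ∧ (x = u i ∨ x = v i) ∧ (y = u j ∨ y = v j) := by
  constructor
  · rintro ⟨i, j, a, b, hij, ha, hb, h⟩
    rcases Sym2.eq_iff.1 h with ⟨rfl, rfl⟩ | ⟨rfl, rfl⟩
    exacts [⟨i, j, hij, ha, hb⟩, ⟨j, i, hij.symm, hb, ha⟩]
  · rintro ⟨i, j, hij, hx, hy⟩
    exact ⟨i, j, x, y, hij, hx, hy, rfl⟩

def crossGraph (u v : ι → V) : SimpleGraph V := fromEdgeSet {e | IsCrossEdge u v e}

def badGraph (B : SimpleGraph V) (u v : ι → V) : SimpleGraph V :=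
  fromEdgeSet {e | IsBadEdge B u v e}

theorem edgeSet_badGraph : (badGraph B u v).edgeSet = {e | IsBadEdge B u v e} := by
  rw [badGraph, edgeSet_fromEdgeSet, sdiff_eq_left, Set.disjoint_left]
  exact fun e he => B.not_isDiag_of_mem_edgeSet he.2

theorem badGraph_le_crossGraph : badGraph B u v ≤ crossGraph u v :=
  fromEdgeSet_mono fun _ he => he.1

theorem isGoodEdge_of_not_adj_badGraph {x y : V} (hxy : (crossGraph u v).Adj x y)
    (h : ¬(badGraph B u v).Adj x y) : IsGoodEdge B u v s(x, y) := by
  rw [crossGraph, fromEdgeSet_adj] at hxy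
  exact ⟨hxy.1, fun hB => h (fromEdgeSet_adj _ |>.2 ⟨⟨hxy.1, hB⟩, hxy.2⟩)⟩

theorem dval_mk_eq_degree_add_degree [Fintype V] [DecidableEq V]
    [DecidableRel (badGraph B u v).Adj] {x y : V} (hxy : x ≠ y)
    (h : ¬(badGraph B u v).Adj x y) :
    Dval B u v s(x, y) = (badGraph B u v).degree x + (badGraph B u v).degree y := by
  have hunion : {f | IsBadEdge B u v f ∧ ∃ z, z ∈ s(x, y) ∧ z ∈ f} =
      ↑((badGraph B u v).incidenceFinset x ∪ (badGraph B u v).incidenceFinset y) := by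
    ext f
    simp [incidenceSet, edgeSet_badGraph, and_or_left]
  have hdisj : Disjoint ((badGraph B u v).incidenceFinset x)
      ((badGraph B u v).incidenceFinset y) := by
    rw [← Finset.disjoint_coe, coe_incidenceFinset, coe_incidenceFinset,
      Set.disjoint_iff_inter_eq_empty]
    exact incidenceSet_inter_incidenceSet_of_not_adj _ h hxy
  rw [Dval, hunion, Set.ncard_coe_finset, card_union_of_disjoint hdisj,
    card_incidenceFinset_eq_degree, card_incidenceFinset_eq_degree]

theorem mem_endpointSet_iff {y : V} : y ∈ endpointSet u v ↔ ∃ j, y = u j ∨ y = v j := by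
  simp [endpointSet, exists_or, eq_comm]

theorem index_eq_of_endpoint (hinj : Injective (Sum.elim u v)) {i j : ι} {x : V}
    (hi : x = u i ∨ x = v i) (hj : x = u j ∨ x = v j) : i = j := by
  rcases hi with rfl | rfl <;> rcases hj with h | h
  · exact Sum.inl_injective (hinj (a₁ := .inl i) (a₂ := .inl j) h)
  · exact absurd (hinj (a₁ := .inl i) (a₂ := .inr j) h) Sum.inl_ne_inr
  · exact absurd (hinj (a₁ := .inr i) (a₂ := .inl j) h) Sum.inr_ne_inl
  · exact Sum.inr_injective (hinj (a₁ := .inr i) (a₂ := .inr j) h)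

theorem exists_other_endpoint (hinj : Injective (Sum.elim u v)) {i : ι} {x : V}
    (hx : x = u i ∨ x = v i) :
    ∃ x', (x' = u i ∨ x' = v i) ∧ x ≠ x' := by
  have hne : u i ≠ v i := fun h => Sum.inl_ne_inr (hinj (a₁ := .inl i) (a₂ := .inr i) h)
  rcases hx with rfl | rfl
  exacts [⟨v i, .inr rfl, hne⟩, ⟨u i, .inl rfl, hne.symm⟩]

theorem mem_endpointSet_of_crossGraph_adj {x y : V} (h : (crossGraph u v).Adj x y) :
    x ∈ endpointSet u v := by
  obtain ⟨i, -, -, hx, -⟩ := isCrossEdge_mk_iff.1 (fromEdgeSet_adj _ |>.1 h).1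
  exact mem_endpointSet_iff.2 ⟨i, hx⟩

theorem crossGraph_adj_iff (hinj : Injective (Sum.elim u v)) {i : ι} {x x' y : V}
    (hx : x = u i ∨ x = v i) (hx' : x' = u i ∨ x' = v i) (hxx' : x ≠ x') :
    (crossGraph u v).Adj x y ↔ y ∈ endpointSet u v ∧ y ≠ x ∧ y ≠ x' := by
  have hother : ∀ z, (z = u i ∨ z = v i) ↔ z = x ∨ z = x' := by
    rcases hx with rfl | rfl <;> rcases hx' with rfl | rfl <;> grind
  rw [crossGraph, fromEdgeSet_adj, Set.mem_ofPred_eq, isCrossEdge_mk_iff, mem_endpointSet_iff]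
  constructor
  · rintro ⟨⟨i', j, hij, hxi', hy⟩, -⟩
    obtain rfl := index_eq_of_endpoint hinj hxi' hx
    have hyx : ¬(y = x ∨ y = x') := fun h => hij (index_eq_of_endpoint hinj ((hother y).2 h) hy)
    exact ⟨⟨j, hy⟩, not_or.1 hyx⟩
  · rintro ⟨⟨j, hy⟩, hyx, hyx'⟩
    refine ⟨⟨i, j, ?_, hx, hy⟩, fun h => hyx h.symm⟩
    rintro rfl
    exact ((hother y).1 hy).elim hyx hyx'

def endpointFinset [Fintype ι] [DecidableEq V] (u v : ι → V) : Finset V :=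
  univ.image (Sum.elim u v)

theorem coe_endpointFinset [Fintype ι] [DecidableEq V] :
    (endpointFinset u v : Set V) = endpointSet u v := by
  rw [endpointFinset, coe_image, coe_univ, Set.image_univ, Set.Sum.elim_range, endpointSet]

theorem card_endpointFinset [Fintype ι] [DecidableEq V] (hinj : Injective (Sum.elim u v)) :
    #(endpointFinset u v) = 2 * Fintype.card ι := by
  rw [endpointFinset, card_image_of_injective _ hinj, card_univ, Fintype.card_sum, two_mul]

end

section

variable {V : Type*} [Fintype V] {G H : SimpleGraph V} [DecidableRel G.Adj]

theorem adj_of_two_lt_degree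
    (hD : ∀ x y, H.Adj x y → ¬G.Adj x y → G.degree x + G.degree y ≤ 2)
    {x y : V} (hx : 2 < G.degree x) (hxy : H.Adj x y) : G.Adj x y :=
  by_contra fun h => by have := hD x y hxy h; omega

theorem degree_eq_zero_of_not_adj
    (hD : ∀ x y, H.Adj x y → ¬G.Adj x y → G.degree x + G.degree y ≤ 2)
    {x y : V} (hx : 2 ≤ G.degree x) (hxy : H.Adj x y) (h : ¬G.Adj x y) : G.degree y = 0 := by
  have := hD x y hxy h; omega

theorem pairwise_disjoint_edgeSet_of_degree_le_one (h : ∀ x, G.degree x ≤ 1) :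
    G.edgeSet.Pairwise fun e f => ∀ z, z ∈ e → z ∉ f := by
  classical
  intro e he f hf hef z hze hzf
  have hcard : #(G.incidenceFinset z) ≤ 1 := (card_incidenceFinset_eq_degree G z).trans_le (h z)
  exact hef (card_le_one.1 hcard e (by simp [incidenceSet, *]) f (by simp [incidenceSet, *]))

end

section

variable {V ι : Type*} [Fintype V] {u v : ι → V} {G : SimpleGraph V} [DecidableRel G.Adj]

theorem degree_eq_zero_of_notMem_endpointSet (hG : G ≤ crossGraph u v) {x : V}
    (hx : x ∉ endpointSet u v) : G.degree x = 0 :=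
  Nat.eq_zero_of_not_pos fun h =>
    let ⟨_, hxy⟩ := (G.degree_pos_iff_exists_adj x).1 h
    hx (mem_endpointSet_of_crossGraph_adj (hG hxy))

variable [DecidableEq V]

section

variable [Fintype ι]

theorem sum_degree_endpointFinset (hG : G ≤ crossGraph u v) :
    ∑ x ∈ endpointFinset u v, G.degree x = 2 * #G.edgeFinset := by
  rw [← sum_degrees_eq_twice_card_edges]
  refine sum_subset (subset_univ _) fun x _ hx => degree_eq_zero_of_notMem_endpointSet hG ?_
  rwa [← coe_endpointFinset, mem_coe]

theorem degree_le_two (hinj : Injective (Sum.elim u v)) (hG : G ≤ crossGraph u v)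
    (hE : #G.edgeFinset < 2 * Fintype.card ι - 2)
    (hD : ∀ x y, (crossGraph u v).Adj x y → ¬G.Adj x y → G.degree x + G.degree y ≤ 2)
    (x : V) : G.degree x ≤ 2 := by
  by_contra! hx
  obtain ⟨y, hxy⟩ := (G.degree_pos_iff_exists_adj x).1 (by omega)
  obtain ⟨i, hi⟩ := mem_endpointSet_iff.1 (mem_endpointSet_of_crossGraph_adj (hG hxy))
  obtain ⟨x', hx', hxx'⟩ := exists_other_endpoint hinj hi
  have hsub : endpointFinset u v \ {x, x'} ⊆ G.neighborFinset x := by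
    intro y hy
    simp only [mem_sdiff, mem_insert, mem_singleton, not_or] at hy
    rw [mem_neighborFinset]
    refine adj_of_two_lt_degree hD hx ((crossGraph_adj_iff hinj hi hx' hxx').2 ⟨?_, hy.2⟩)
    rw [← coe_endpointFinset]
    exact hy.1
  have hpair : {x, x'} ⊆ endpointFinset u v := by
    simp only [insert_subset_iff, singleton_subset_iff, ← mem_coe, coe_endpointFinset,
      mem_endpointSet_iff]
    exact ⟨⟨i, hi⟩, ⟨i, hx'⟩⟩
  have hcard : 2 * Fintype.card ι - 2 ≤ #G.edgeFinset :=
    calc 2 * Fintype.card ι - 2 = #(endpointFinset u v \ {x, x'}) := by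
          rw [card_sdiff_of_subset hpair, card_endpointFinset hinj, card_pair hxx']
      _ ≤ G.degree x := card_le_card hsub
      _ ≤ #G.edgeFinset := G.degree_le_card_edgeFinset x
  omega

theorem degree_eq_one_of_degree_le_one (hinj : Injective (Sum.elim u v)) (hG : G ≤ crossGraph u v)
    (hE : #G.edgeFinset = Fintype.card ι) (h : ∀ x, G.degree x ≤ 1) {z : V}
    (hz : z ∈ endpointSet u v) : G.degree z = 1 := by
  have hsum : ∑ x ∈ endpointFinset u v, G.degree x = ∑ _x ∈ endpointFinset u v, 1 := by
    rw [sum_degree_endpointFinset hG, sum_const, card_endpointFinset hinj, hE, smul_eq_mul,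
      mul_one]
  refine (sum_eq_sum_iff_of_le fun x _ => h x).1 hsum z ?_
  rwa [← mem_coe, coe_endpointFinset]

theorem matching_of_degree_le_one (hinj : Injective (Sum.elim u v)) (hG : G ≤ crossGraph u v)
    (hE : #G.edgeFinset = Fintype.card ι) (h : ∀ x, G.degree x ≤ 1) :
    G.edgeSet.Pairwise (fun e f => ∀ z, z ∈ e → z ∉ f) ∧
      ∀ z ∈ endpointSet u v, ∃ e ∈ G.edgeSet, z ∈ e := by
  refine ⟨pairwise_disjoint_edgeSet_of_degree_le_one h, fun z hz => ?_⟩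
  obtain ⟨y, hzy⟩ := (G.degree_pos_iff_exists_adj z).1
    (by rw [degree_eq_one_of_degree_le_one hinj hG hE h hz]; omega)
  exact ⟨s(z, y), hzy, Sym2.mem_mk_left z y⟩

end

theorem neighborFinset_eq_of_degree_eq_two (hinj : Injective (Sum.elim u v))
    (hG : G ≤ crossGraph u v) (hE : #G.edgeFinset = 4)
    (hD : ∀ x y, (crossGraph u v).Adj x y → ¬G.Adj x y → G.degree x + G.degree y ≤ 2)
    (hdeg : ∀ z, G.degree z ≤ 2) {i : ι} {x x' : V} (hx : x = u i ∨ x = v i)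
    (hx' : x' = u i ∨ x' = v i) (hxx' : x ≠ x') (h2 : G.degree x = 2) :
    G.neighborFinset x' = G.neighborFinset x := by
  have hcross y := crossGraph_adj_iff (y := y) hinj hx hx' hxx'
  have hcross' y := crossGraph_adj_iff (y := y) hinj hx' hx hxx'.symm
  have hzero : ∀ z ∉ insert x (insert x' (G.neighborFinset x)), G.degree z = 0 := by
    intro z hz
    simp only [mem_insert, mem_neighborFinset, not_or] at hz
    by_cases hzE : z ∈ endpointSet u v
    · exact degree_eq_zero_of_not_adj hD h2.ge ((hcross z).2 ⟨hzE, hz.1, hz.2.1⟩) hz.2.2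
    · exact degree_eq_zero_of_notMem_endpointSet hG hzE
  have hx'N : x' ∉ G.neighborFinset x := fun h =>
    ((hcross x').1 (hG ((mem_neighborFinset ..).1 h))).2.2 rfl
  have hxN : x ∉ insert x' (G.neighborFinset x) := by
    simp [hxx']
  have hsum : 2 + (G.degree x' + ∑ y ∈ G.neighborFinset x, G.degree y) = 8 := by
    rw [← h2, ← sum_insert (f := fun y => G.degree y) hx'N,
      ← sum_insert (f := fun y => G.degree y) hxN,
      sum_subset (subset_univ _) fun z _ hz => hzero z hz, sum_degrees_eq_twice_card_edges, hE]
  have hN : ∑ y ∈ G.neighborFinset x, G.degree y ≤ 4 := by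
    simpa [h2] using sum_le_card_nsmul (G.neighborFinset x) _ 2 fun y _ => hdeg y
  have hx'2 : G.degree x' = 2 := by
    have := hdeg x'
    omega
  refine eq_of_subset_of_card_le (fun w hw => ?_)
    (by rw [card_neighborFinset_eq_degree, card_neighborFinset_eq_degree, h2, hx'2])
  rw [mem_neighborFinset] at hw ⊢
  obtain ⟨hwE, hwx', hwx⟩ := (hcross' w).1 (hG hw)
  by_contra hn
  have hw0 := degree_eq_zero_of_not_adj hD h2.ge ((hcross w).2 ⟨hwE, hwx, hwx'⟩) hn
  exact (G.degree_pos_iff_exists_adj w).2 ⟨x', hw.symm⟩ |>.ne' hw0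

theorem exists_edgeSet_eq_fourCycle (hinj : Injective (Sum.elim u v))
    (hG : G ≤ crossGraph u v) (hE : #G.edgeFinset = 4)
    (hD : ∀ x y, (crossGraph u v).Adj x y → ¬G.Adj x y → G.degree x + G.degree y ≤ 2)
    (hdeg : ∀ z, G.degree z ≤ 2) {x : V} (h2 : G.degree x = 2) :
    ∃ a b c d : V, a ≠ b ∧ a ≠ c ∧ a ≠ d ∧ b ≠ c ∧ b ≠ d ∧ c ≠ d ∧
      G.edgeSet = {s(a, b), s(b, c), s(c, d), s(d, a)} ∧
      ∀ z ∉ ({a, b, c, d} : Set V), ∀ e ∈ G.edgeSet, z ∉ e := by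
  obtain ⟨y, hxy⟩ := (G.degree_pos_iff_exists_adj x).1 (by omega)
  obtain ⟨i, hi⟩ := mem_endpointSet_iff.1 (mem_endpointSet_of_crossGraph_adj (hG hxy))
  obtain ⟨x', hx', hxx'⟩ := exists_other_endpoint hinj hi
  have hN := neighborFinset_eq_of_degree_eq_two hinj hG hE hD hdeg hi hx' hxx' h2
  obtain ⟨y₁, y₂, hy, hNx⟩ := card_eq_two.1 h2
  have h₁ : G.Adj x y₁ := by simp [← mem_neighborFinset, hNx]
  have h₂ : G.Adj x y₂ := by simp [← mem_neighborFinset, hNx]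
  have h₃ : G.Adj x' y₁ := by simp [← mem_neighborFinset, hN, hNx]
  have h₄ : G.Adj x' y₂ := by simp [← mem_neighborFinset, hN, hNx]
  have hsub : ({s(x, y₁), s(y₁, x'), s(x', y₂), s(y₂, x)} : Finset _) ⊆ G.edgeFinset := by
    simp [insert_subset_iff, h₁, h₂.symm, h₃.symm, h₄]
  have hcard : #G.edgeFinset ≤ #({s(x, y₁), s(y₁, x'), s(x', y₂), s(y₂, x)} : Finset _) := by
    rw [hE, card_insert_of_notMem, card_insert_of_notMem, card_pair] <;>
      simp [hxx', hy, h₁.ne, h₂.ne, h₄.ne, Ne.symm]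
  have hE4 : G.edgeSet = {s(x, y₁), s(y₁, x'), s(x', y₂), s(y₂, x)} := by
    rw [← coe_edgeFinset, ← eq_of_subset_of_card_le hsub hcard]
    simp
  refine ⟨x, y₁, x', y₂, h₁.ne, hxx', h₂.ne, h₃.ne.symm, hy, h₄.ne, hE4, ?_⟩
  intro z hz e he hze
  rw [hE4] at he
  simp only [Set.mem_insert_iff, Set.mem_singleton_iff, not_or] at hz he
  rcases he with rfl | rfl | rfl | rfl <;> simp_all

end

theorem bad_edges_matching_or_four_cycle_general
    {V : Type*} [Fintype V] [DecidableEq V]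
    (B : SimpleGraph V) (u v : Fin 4 → V)
    (P : ∀ i : Fin 4, (⊤ : SimpleGraph V).Walk (u i) (v i))
    (hne : ∀ i, u i ≠ v i)
    (hdisj : ∀ i j, i ≠ j → List.Disjoint (P i).support (P j).support)
    (hbr : Set.ncard {e : Sym2 V | IsBadEdge B u v e} = 4)
    (hD : ∀ e, IsGoodEdge B u v e → Dval B u v e ≤ 2) :
    (({e : Sym2 V | IsBadEdge B u v e}).Pairwise (fun e f => ∀ z, z ∈ e → z ∉ f) ∧
      ∀ z ∈ endpointSet u v, ∃ e, IsBadEdge B u v e ∧ z ∈ e) ∨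
    (∃ a b c d : V, a ≠ b ∧ a ≠ c ∧ a ≠ d ∧ b ≠ c ∧ b ≠ d ∧ c ≠ d ∧
      {e : Sym2 V | IsBadEdge B u v e} = {s(a, b), s(b, c), s(c, d), s(d, a)} ∧
      ∀ z ∈ endpointSet u v, z ∉ ({a, b, c, d} : Set V) →
        ∀ e, IsBadEdge B u v e → z ∉ e) := by
  classical
  have hinj := injective_sumElim_of_disjoint_support P hne hdisj
  have hG : badGraph B u v ≤ crossGraph u v := badGraph_le_crossGraph
  have hbad e : IsBadEdge B u v e ↔ e ∈ (badGraph B u v).edgeSet := by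
    rw [edgeSet_badGraph]; rfl
  simp only [hbad, Set.ofPred_mem_eq] at hbr ⊢
  have hE : #(badGraph B u v).edgeFinset = 4 := by
    rwa [← Set.ncard_coe_finset, coe_edgeFinset]
  have hdegSum (x y : V) (hxy : (crossGraph u v).Adj x y) (h : ¬(badGraph B u v).Adj x y) :
      (badGraph B u v).degree x + (badGraph B u v).degree y ≤ 2 := by
    rw [← dval_mk_eq_degree_add_degree hxy.ne h]
    exact hD _ (isGoodEdge_of_not_adj_badGraph hxy h)
  have hdeg := degree_le_two hinj hG (by simp [hE]) hdegSum
  by_cases h1 : ∀ x, (badGraph B u v).degree x ≤ 1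
  · exact .inl (matching_of_degree_le_one hinj hG (by simp [hE]) h1)
  · obtain ⟨x, hx⟩ := not_forall.1 h1
    obtain ⟨a, b, c, d, hab, hac, had, hbc, hbd, hcd, hcyc, hout⟩ :=
      exists_edgeSet_eq_fourCycle hinj hG hE hdegSum hdeg (le_antisymm (hdeg x) (not_le.1 hx))
    exact .inr ⟨a, b, c, d, hab, hac, had, hbc, hbd, hcd, hcyc, fun z _ => hout z⟩

/-- Suppose `𝒫` consists of exactly 4 pairwise vertex-disjoint paths of `K_n`, each with
at least one edge, there are exactly 4 bad edges, and `D(e) ≤ 2` for every good edge `e`.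
Then either the 4 bad edges are pairwise vertex-disjoint (forming a perfect matching on
the 8 vertices of `End(𝒫)`), or they form a cycle of length 4 and the remaining 4
vertices of `End(𝒫)` are incident with no bad edge. -/
theorem bad_edges_matching_or_four_cycle
    {V : Type*} [Fintype V] [DecidableEq V]
    (B : SimpleGraph V) (u v : Fin 4 → V)
    (P : ∀ i : Fin 4, (⊤ : SimpleGraph V).Walk (u i) (v i))
    (hP : ∀ i, (P i).IsPath) (hne : ∀ i, u i ≠ v i)
    (hdisj : ∀ i j, i ≠ j → List.Disjoint (P i).support (P j).support)
    (hbr : Set.ncard {e : Sym2 V | IsBadEdge B u v e} = 4)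
    (hD : ∀ e, IsGoodEdge B u v e → Dval B u v e ≤ 2) :
    (({e : Sym2 V | IsBadEdge B u v e}).Pairwise (fun e f => ∀ z, z ∈ e → z ∉ f) ∧
      ∀ z ∈ endpointSet u v, ∃ e, IsBadEdge B u v e ∧ z ∈ e) ∨
    (∃ a b c d : V, a ≠ b ∧ a ≠ c ∧ a ≠ d ∧ b ≠ c ∧ b ≠ d ∧ c ≠ d ∧
      {e : Sym2 V | IsBadEdge B u v e} = {s(a, b), s(b, c), s(c, d), s(d, a)} ∧
      ∀ z ∈ endpointSet u v, z ∉ ({a, b, c, d} : Set V) →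
        ∀ e, IsBadEdge B u v e → z ∉ e) :=
  bad_edges_matching_or_four_cycle_general B u v P hne hdisj hbr hD
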